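/- arXiv:1710.04325 — 8 statements merged into one kernel-verified Lean document; each statement's English description precedes it below -/
import Mathlib

section
/- Let P and Q be nonempty finite sets in ℝ^d and K a positive definite kernel with feature map φ into a Hilbert space H, so K(x,y) = ⟨φ(x), φ(y)⟩. Define kde_P(x) = (1/|P|) Σ_{p∈P} K(x,p) and μ_P = (1/|P|) Σ_{p∈P} φ(p), similarly for Q. If sup_{x∈ℝ^d} |kde_P(x) - kde_Q(x)| ≤ ε, then ‖μ_P - μ_Q‖_H² ≤ 2ε. -/
/-!
Put `v = μ_P - μ_Q`. By the reproducing property `⟪v, φ x⟫ = kde_P x - kde_Q x`, so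
`|⟪v, φ x⟫| ≤ ε` for every `x`; averaging over `P` and over `Q` gives `|⟪v, μ_P⟫| ≤ ε` and
`|⟪v, μ_Q⟫| ≤ ε`, whence `‖v‖² = ⟪v, μ_P⟫ - ⟪v, μ_Q⟫ ≤ 2ε`.
-/

open RealInnerProductSpace

section Mean

variable {ι H : Type*} [NormedAddCommGroup H] [InnerProductSpace ℝ H]

lemma abs_inv_card_mul_sum_le {s : Finset ι} {g : ι → ℝ} {ε : ℝ} (hε : 0 ≤ ε)
    (h : ∀ i ∈ s, |g i| ≤ ε) : |(s.card : ℝ)⁻¹ * ∑ i ∈ s, g i| ≤ ε := by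
  rw [abs_mul, abs_inv, Nat.abs_cast]
  calc (s.card : ℝ)⁻¹ * |∑ i ∈ s, g i| ≤ (s.card : ℝ)⁻¹ * (s.card * ε) := by
        gcongr
        simpa only [nsmul_eq_mul] using
          (Finset.abs_sum_le_sum_abs _ _).trans (Finset.sum_le_card_nsmul _ _ _ h)
    _ ≤ ε := by
        rcases s.eq_empty_or_nonempty with rfl | hs
        · simpa using hε
        · rw [inv_mul_cancel_left₀ (by exact_mod_cast hs.card_pos.ne')]

lemma inner_inv_card_smul_sum (v : H) (s : Finset ι) (f : ι → H) :
    ⟪v, (s.card : ℝ)⁻¹ • ∑ i ∈ s, f i⟫ = (s.card : ℝ)⁻¹ * ∑ i ∈ s, ⟪v, f i⟫ := by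
  rw [real_inner_smul_right, inner_sum]

lemma abs_inner_inv_card_smul_sum_le {v : H} {s : Finset ι} {f : ι → H} {ε : ℝ} (hε : 0 ≤ ε)
    (h : ∀ i ∈ s, |⟪v, f i⟫| ≤ ε) : |⟪v, (s.card : ℝ)⁻¹ • ∑ i ∈ s, f i⟫| ≤ ε := by
  rw [inner_inv_card_smul_sum]
  exact abs_inv_card_mul_sum_le hε h

end Mean

theorem stmt1_general {d : ℕ} {H : Type*} [NormedAddCommGroup H] [InnerProductSpace ℝ H]
    (φ : EuclideanSpace ℝ (Fin d) → H)
    (K : EuclideanSpace ℝ (Fin d) → EuclideanSpace ℝ (Fin d) → ℝ)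
    (hK : ∀ x y, K x y = ⟪φ x, φ y⟫)
    (P Q : Finset (EuclideanSpace ℝ (Fin d)))
    (ε : ℝ)
    (h : ∀ x : EuclideanSpace ℝ (Fin d),
      |(P.card : ℝ)⁻¹ * ∑ p ∈ P, K x p - (Q.card : ℝ)⁻¹ * ∑ q ∈ Q, K x q| ≤ ε) :
    ‖(P.card : ℝ)⁻¹ • (∑ p ∈ P, φ p) - (Q.card : ℝ)⁻¹ • (∑ q ∈ Q, φ q)‖ ^ 2 ≤ 2 * ε := by
  set μP := (P.card : ℝ)⁻¹ • ∑ p ∈ P, φ p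
  set μQ := (Q.card : ℝ)⁻¹ • ∑ q ∈ Q, φ q
  have hε : 0 ≤ ε := (abs_nonneg _).trans (h 0)
  have hfeature : ∀ x, |⟪μP - μQ, φ x⟫| ≤ ε := fun x => by
    rw [real_inner_comm, inner_sub_right, inner_inv_card_smul_sum, inner_inv_card_smul_sum]
    simpa only [hK] using h x
  calc ‖μP - μQ‖ ^ 2 = ⟪μP - μQ, μP⟫ - ⟪μP - μQ, μQ⟫ := by
        rw [← inner_sub_right, real_inner_self_eq_norm_sq]
    _ ≤ |⟪μP - μQ, μP⟫| + |⟪μP - μQ, μQ⟫| := by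
        linarith [le_abs_self ⟪μP - μQ, μP⟫, neg_abs_le ⟪μP - μQ, μQ⟫]
    _ ≤ ε + ε := add_le_add (abs_inner_inv_card_smul_sum_le hε fun p _ => hfeature p)
        (abs_inner_inv_card_smul_sum_le hε fun q _ => hfeature q)
    _ = 2 * ε := by ring

theorem stmt1 {d : ℕ} {H : Type*} [NormedAddCommGroup H] [InnerProductSpace ℝ H]
    (φ : EuclideanSpace ℝ (Fin d) → H)
    (K : EuclideanSpace ℝ (Fin d) → EuclideanSpace ℝ (Fin d) → ℝ)
    (hK : ∀ x y, K x y = ⟪φ x, φ y⟫)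
    (P Q : Finset (EuclideanSpace ℝ (Fin d))) (hP : P.Nonempty) (hQ : Q.Nonempty)
    (ε : ℝ)
    (h : ∀ x : EuclideanSpace ℝ (Fin d),
      |(P.card : ℝ)⁻¹ * ∑ p ∈ P, K x p - (Q.card : ℝ)⁻¹ * ∑ q ∈ Q, K x q| ≤ ε) :
    ‖(P.card : ℝ)⁻¹ • (∑ p ∈ P, φ p) - (Q.card : ℝ)⁻¹ • (∑ q ∈ Q, φ q)‖ ^ 2 ≤ 2 * ε :=
  stmt1_general φ K hK P Q ε h
end

section
/- For any c, x ∈ ℝ^d, exp(-‖x-c‖²) = ∫_{(0,∞)^d} (∏_{i=1}^d 2 r_i exp(-r_i²)) · 𝟙[x ∈ ∏_{i=1}^d [c_i - r_i, c_i + r_i]] dr_1 ⋯ dr_d. -/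
/-!
Both sides factor over the coordinates: the Gaussian because `‖x - c‖² = ∑ i, (x i - c i)²`, the
integrand because the box condition is `∀ i, |x i - c i| ≤ r i`, so by Fubini the integral is
`∏ i, ∫_{|x i - c i|}^∞ 2 t exp (-t²) dt`, and each factor equals `exp (-(x i - c i)²)` since
`-exp (-t²)` is a primitive of `2 t exp (-t²)`.
-/

open scoped Classical

open MeasureTheory Set Real

theorem integral_Ioi_two_mul_mul_exp_neg_sq (a : ℝ) :
    ∫ t in Ioi a, 2 * t * exp (-t ^ 2) = exp (-a ^ 2) := by
  have hderiv (t : ℝ) : HasDerivAt (fun t ↦ -exp (-t ^ 2)) (2 * t * exp (-t ^ 2)) t := by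
    have hsq : HasDerivAt (fun t ↦ -t ^ 2) (-(2 * t)) t := by
      simpa using (hasDerivAt_pow 2 t).fun_neg
    exact hsq.exp.fun_neg.congr_deriv (by ring)
  have hint : IntegrableOn (fun t ↦ 2 * t * exp (-t ^ 2)) (Ioi a) := by
    simpa [mul_assoc] using ((integrable_mul_exp_neg_mul_sq one_pos).const_mul 2).integrableOn
  have hlim : Filter.Tendsto (fun t ↦ -exp (-t ^ 2)) Filter.atTop (nhds 0) := by
    simpa using (tendsto_exp_neg_atTop_nhds_zero.comp
      (Filter.tendsto_pow_atTop two_ne_zero)).neg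
  simpa using integral_Ioi_of_hasDerivAt_of_tendsto' (fun t _ ↦ hderiv t) hint hlim

theorem integral_Ioi_zero_two_mul_mul_exp_neg_sq_mul_boole {a : ℝ} (ha : 0 ≤ a) :
    ∫ t in Ioi 0, 2 * t * exp (-t ^ 2) * (if a ≤ t then 1 else 0) = exp (-a ^ 2) := by
  have hset : (Ioi 0 ∩ Ici a : Set ℝ) =ᵐ[volume] Ioi a := by
    simpa [Ioi_inter_Ioi, ha] using
      (ae_eq_refl (Ioi (0 : ℝ))).inter (Ioi_ae_eq_Ici : Ioi a =ᵐ[volume] Ici a).symm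
  have hind : (fun t ↦ 2 * t * exp (-t ^ 2) * if a ≤ t then 1 else 0) =
      (Ici a).indicator (fun t ↦ 2 * t * exp (-t ^ 2)) := by
    ext t
    simp [indicator_apply]
  rw [hind, setIntegral_indicator measurableSet_Ici, setIntegral_congr_set hset,
    integral_Ioi_two_mul_mul_exp_neg_sq]

theorem EuclideanSpace.exp_neg_norm_sq_eq_prod {ι : Type*} [Fintype ι] (v : EuclideanSpace ℝ ι) :
    exp (-‖v‖ ^ 2) = ∏ i, exp (-v i ^ 2) := by
  simp [EuclideanSpace.real_norm_sq_eq, ← exp_sum, Finset.sum_neg_distrib]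

theorem setIntegral_preimage_ofLp {ι E : Type*} [Fintype ι] [NormedAddCommGroup E]
    [NormedSpace ℝ E]
    (f : (ι → ℝ) → E) (s : Set (ι → ℝ)) :
    ∫ r : EuclideanSpace ℝ ι in WithLp.ofLp ⁻¹' s, f r = ∫ r in s, f r :=
  (PiLp.volume_preserving_ofLp ι).setIntegral_preimage_emb
    (MeasurableEquiv.toLp 2 (ι → ℝ)).symm.measurableEmbedding f s

theorem stmt6 {d : ℕ} (c x : EuclideanSpace ℝ (Fin d)) :
    Real.exp (-‖x - c‖ ^ 2) =
      ∫ r : EuclideanSpace ℝ (Fin d) in (WithLp.ofLp ⁻¹' (Set.univ.pi fun _ : Fin d => Set.Ioi (0 : ℝ))),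
        (∏ i, 2 * r i * Real.exp (-(r i) ^ 2)) *
          (if ∀ i, c i - r i ≤ x i ∧ x i ≤ c i + r i then (1 : ℝ) else 0) := by
  have hbox (i : Fin d) (t : ℝ) : (c i - t ≤ x i ∧ x i ≤ c i + t) ↔ |x i - c i| ≤ t := by
    rw [abs_sub_comm, mem_Icc_iff_abs_le, mem_Icc]
  calc exp (-‖x - c‖ ^ 2) = ∏ i, exp (-(x i - c i) ^ 2) :=
        EuclideanSpace.exp_neg_norm_sq_eq_prod (x - c)
    _ = ∏ i, ∫ t in Ioi 0, 2 * t * exp (-t ^ 2) * (if |x i - c i| ≤ t then 1 else 0) := by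
      simp_rw [integral_Ioi_zero_two_mul_mul_exp_neg_sq_mul_boole (abs_nonneg _), sq_abs]
    _ = ∫ r in univ.pi fun _ ↦ Ioi 0,
          ∏ i, 2 * r i * exp (-r i ^ 2) * (if |x i - c i| ≤ r i then 1 else 0) := by
      rw [volume_pi, Measure.restrict_pi_pi]
      exact (integral_fintype_prod_eq_prod _).symm
    _ = ∫ r in univ.pi fun _ ↦ Ioi 0, (∏ i, 2 * r i * exp (-r i ^ 2)) *
          (if ∀ i, c i - r i ≤ x i ∧ x i ≤ c i + r i then 1 else 0) := by
      congr 1 with r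
      rw [Finset.prod_mul_distrib, Fintype.prod_boole]
      simp only [hbox]
      -- the two `if`s differ only in their `Decidable` instances
      congr!
    _ = _ := (setIntegral_preimage_ofLp _ _).symm
end

section
/- Let P ⊂ ℝ^d be a finite set and χ : P → {-1, +1} a coloring. Let disc_R(P,χ) = sup over axis-aligned boxes R of |Σ_{p∈P∩R} χ(p)|, and let disc_K(P,χ) = sup_{x∈ℝ^d} |Σ_{p∈P} χ(p) exp(-‖x-p‖²)|. Then disc_K(P,χ) ≤ disc_R(P,χ). -/
open scoped Classical

/-!
Writing `exp (-‖x - p‖²) = ∏ᵢ exp (-(xᵢ - pᵢ)²)`, each factor is the Lebesgue measure of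
`{σᵢ ∈ (0, 1] | σᵢ ≤ exp (-(xᵢ - pᵢ)²)}`, so the Gaussian is the measure of the set of
`σ ∈ (0, 1]ᵈ` with `σᵢ ≤ exp (-(xᵢ - pᵢ)²)` for all `i`. For fixed `σ` this condition says that
`p` lies in the box `∏ᵢ [xᵢ - √(-log σᵢ), xᵢ + √(-log σᵢ)]`. Hence the Gaussian discrepancy at `x`
is an average over `σ` of box discrepancies, each bounded by `B`.
-/

open MeasureTheory Set Real

lemma Real.exp_neg_norm_sub_sq_eq_prod {ι : Type*} [Fintype ι] (x p : EuclideanSpace ℝ ι) :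
    exp (-‖x - p‖ ^ 2) = ∏ i, exp (-(x i - p i) ^ 2) := by
  rw [EuclideanSpace.real_norm_sq_eq, ← Finset.sum_neg_distrib, exp_sum]
  rfl

lemma Real.le_exp_neg_sub_sq_iff {σ : ℝ} (hσ : σ ∈ Ioc (0 : ℝ) 1) (a b : ℝ) :
    σ ≤ exp (-(a - b) ^ 2) ↔ a - √(-log σ) ≤ b ∧ b ≤ a + √(-log σ) := by
  have hlog : 0 ≤ -log σ := neg_nonneg.2 (log_nonpos hσ.1.le hσ.2)
  have hbox : a - √(-log σ) ≤ b ∧ b ≤ a + √(-log σ) ↔ |a - b| ≤ √(-log σ) := by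
    rw [abs_le]
    constructor <;> intro h <;> constructor <;> linarith [h.1, h.2]
  rw [hbox, le_sqrt (abs_nonneg _) hlog, sq_abs, ← log_le_iff_le_exp hσ.1]
  constructor <;> intro h <;> linarith

lemma abs_sum_mul_measureReal_le {α ι : Type*} [MeasurableSpace α] {μ : Measure α}
    [IsProbabilityMeasure μ] {s : Finset ι} {c : ι → ℝ} {A : ι → Set α}
    (hA : ∀ i ∈ s, MeasurableSet (A i)) {B : ℝ}
    (hB : ∀ᵐ a ∂μ, |∑ i ∈ s, (A i).indicator (fun _ => c i) a| ≤ B) :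
    |∑ i ∈ s, c i * μ.real (A i)| ≤ B := by
  have hint :
      ∫ a, ∑ i ∈ s, (A i).indicator (fun _ => c i) a ∂μ = ∑ i ∈ s, c i * μ.real (A i) := by
    rw [integral_finsetSum _ fun i hi => (integrable_const (c i)).indicator (hA i hi)]
    refine Finset.sum_congr rfl fun i hi => ?_
    rw [integral_indicator_const _ (hA i hi), smul_eq_mul, mul_comm]
  rw [← hint, ← norm_eq_abs]
  simpa using norm_integral_le_of_norm_le_const (hB.mono fun _ ha => (norm_eq_abs _).trans_le ha)

section UnitCube

variable {ι : Type*} [Fintype ι]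

instance : IsProbabilityMeasure (volume.restrict (univ.pi fun _ : ι => Ioc (0 : ℝ) 1)) :=
  ⟨by simp [volume_pi_Ioc]⟩

lemma measureReal_restrict_pi_Ioc_zero_one_pi_Iic {e : ι → ℝ} (h0 : 0 ≤ e) (h1 : e ≤ 1) :
    (volume.restrict (univ.pi fun _ : ι => Ioc (0 : ℝ) 1)).real (univ.pi fun i => Iic (e i)) =
      ∏ i, e i := by
  rw [measureReal_restrict_apply (MeasurableSet.univ_pi fun _ => measurableSet_Iic),
    ← pi_inter_distrib]
  have : (fun i => Iic (e i) ∩ Ioc 0 1) = fun i => Ioc 0 (e i) := by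
    ext i σ
    simp only [mem_inter_iff, mem_Iic, mem_Ioc]
    constructor
    · rintro ⟨h, h', -⟩; exact ⟨h', h⟩
    · rintro ⟨h', h⟩; exact ⟨h, h', h.trans (h1 i)⟩
  simpa [this, measureReal_def] using volume_pi_Ioc_toReal (a := 0) h0

end UnitCube

theorem stmt7_general {d : ℕ} (P : Finset (EuclideanSpace ℝ (Fin d)))
    (χ : EuclideanSpace ℝ (Fin d) → ℝ)
    (B : ℝ)
    (hB : ∀ m M : Fin d → ℝ,
      |∑ p ∈ P, (if ∀ i, m i ≤ p i ∧ p i ≤ M i then χ p else 0)| ≤ B) :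
    ∀ x : EuclideanSpace ℝ (Fin d),
      |∑ p ∈ P, χ p * Real.exp (-‖x - p‖ ^ 2)| ≤ B := by
  intro x
  set μ := volume.restrict (univ.pi fun _ : Fin d => Ioc (0 : ℝ) 1)
  have hgauss (p : EuclideanSpace ℝ (Fin d)) :
      exp (-‖x - p‖ ^ 2) = μ.real (univ.pi fun i => Iic (exp (-(x i - p i) ^ 2))) := by
    rw [exp_neg_norm_sub_sq_eq_prod, measureReal_restrict_pi_Ioc_zero_one_pi_Iic
      (fun _ => (exp_pos _).le) (fun _ => exp_le_one_iff.2 (neg_nonpos.2 (sq_nonneg _)))]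
  simp_rw [hgauss]
  refine abs_sum_mul_measureReal_le (fun _ _ => MeasurableSet.univ_pi fun _ => measurableSet_Iic) ?_
  filter_upwards [ae_restrict_mem (MeasurableSet.univ_pi fun _ => measurableSet_Ioc)] with σ hσ
  convert hB (fun i => x i - √(-log (σ i))) (fun i => x i + √(-log (σ i))) using 3 with p
  simp only [indicator_apply, mem_univ_pi]
  exact if_congr (forall_congr' fun i => le_exp_neg_sub_sq_iff (hσ i trivial) _ _) rfl rfl

theorem stmt7 {d : ℕ} (P : Finset (EuclideanSpace ℝ (Fin d)))
    (χ : EuclideanSpace ℝ (Fin d) → ℝ) (hχ : ∀ p ∈ P, χ p = 1 ∨ χ p = -1)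
    (B : ℝ)
    (hB : ∀ m M : Fin d → ℝ,
      |∑ p ∈ P, (if ∀ i, m i ≤ p i ∧ p i ≤ M i then χ p else 0)| ≤ B) :
    ∀ x : EuclideanSpace ℝ (Fin d),
      |∑ p ∈ P, χ p * Real.exp (-‖x - p‖ ^ 2)| ≤ B :=
  stmt7_general P χ B hB
end

section
/- Let z > 0 and let p_i = (z/√2)·e_i ∈ ℝ^n for i = 1,…,n, where e_i is the i-th standard basis vector. For 1 ≤ k < n, let p̄_k = (1/k) Σ_{i=1}^k p_i and p̄ = (1/n) Σ_{i=1}^n p_i. Then ‖p̄ - p̄_k‖ = (z/√2)·√(1/k - 1/n). -/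
/-!
For an orthonormal family `v` and finite index sets `s ⊆ t`, the sums `∑ i ∈ s, v i` and
`∑ j ∈ t, v j` have inner product `#s`. Expanding the square of the distance between the two
averages therefore gives `1/#t - 2/#t + 1/#s = 1/#s - 1/#t`.
-/

open Finset RealInnerProductSpace

namespace Orthonormal

variable {𝕜 E ι : Type*} [RCLike 𝕜] [SeminormedAddCommGroup E] [InnerProductSpace 𝕜 E]
  {v : ι → E}

theorem inner_sum_sum_of_subset (hv : Orthonormal 𝕜 v) {s t : Finset ι} (hst : s ⊆ t) :
    inner 𝕜 (∑ i ∈ s, v i) (∑ j ∈ t, v j) = #s := by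
  classical
  simp [sum_inner, inner_sum, orthonormal_iff_ite.mp hv, Finset.inter_eq_right.mpr hst]

end Orthonormal

theorem Orthonormal.norm_smul_sum_sub_smul_sum_sq {E ι : Type*} [SeminormedAddCommGroup E]
    [InnerProductSpace ℝ E] {v : ι → E} (hv : Orthonormal ℝ v) {s t : Finset ι}
    (hs : s.Nonempty) (hst : s ⊆ t) :
    ‖(#t : ℝ)⁻¹ • ∑ i ∈ t, v i - (#s : ℝ)⁻¹ • ∑ i ∈ s, v i‖ ^ 2 = (#s : ℝ)⁻¹ - (#t : ℝ)⁻¹ := by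
  have hs0 : (#s : ℝ) ≠ 0 := by exact_mod_cast hs.card_ne_zero
  have ht0 : (#t : ℝ) ≠ 0 := by exact_mod_cast (hs.mono hst).card_ne_zero
  rw [norm_sub_sq_real, ← real_inner_self_eq_norm_sq, ← real_inner_self_eq_norm_sq]
  simp only [real_inner_smul_left, real_inner_smul_right, real_inner_comm (∑ i ∈ s, v i),
    hv.inner_sum_sum_of_subset hst, hv.inner_sum_sum_of_subset subset_rfl]
  field_simp
  ring

theorem stmt9 {n k : ℕ} (hk : 1 ≤ k) (hkn : k < n) (z : ℝ) (hz : 0 < z)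
    (p : Fin n → EuclideanSpace ℝ (Fin n))
    (hp : ∀ i, p i = (z / Real.sqrt 2) • EuclideanSpace.single i (1 : ℝ)) :
    ‖((n : ℝ)⁻¹ • ∑ i, p i) -
        ((k : ℝ)⁻¹ • ∑ i ∈ Finset.univ.filter (fun i : Fin n => (i : ℕ) < k), p i)‖ =
      (z / Real.sqrt 2) * Real.sqrt (1 / k - 1 / n) := by
  set s := Finset.univ.filter (fun i : Fin n => (i : ℕ) < k)
  have hs : #s = k := by simp [s, Fin.card_filter_val_lt, hkn.le]
  have hs_ne : s.Nonempty := card_pos.mp (hs ▸ hk)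
  have hsq := EuclideanSpace.orthonormal_single.norm_smul_sum_sub_smul_sum_sq hs_ne (subset_univ s)
  rw [hs, card_univ, Fintype.card_fin] at hsq
  have hc : 0 ≤ z / Real.sqrt 2 := by positivity
  simp only [hp, ← smul_sum, smul_comm _ (z / Real.sqrt 2), ← smul_sub, norm_smul,
    Real.norm_of_nonneg hc, one_div, ← hsq, Real.sqrt_sq (norm_nonneg _)]
end

section
/- Let z > 0, 1 ≤ k < n, and p_i = (z/√2)·e_i ∈ ℝ^n. Define p̄_k = (1/k)Σ_{i≤k} p_i, p̄ = (1/n)Σ_{i=1}^n p_i, and p = p̄_k + (z/√2)·(p̄_k - p̄)/‖p̄_k - p̄‖. Then for every i with 1 ≤ i ≤ k, ‖p - p_i‖² = z² - z²/(2k). -/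
/-!
Write `p i = c • e i` with `c = z / √2` and `(e i)` orthonormal, and let `m s` be the centroid of
`(e i)_{i ∈ s}`. For `s ⊆ t` one has `⟪m s, m t⟫ = 1 / #t`, so for `u ⊆ s ⊆ t` the vectors
`m s - m u` and `m s - m t` are orthogonal and `‖m s - m t‖² = 1 / #s - 1 / #t`.
Taking `u = {i}`, `s = {j < k}`, `t = univ`, the point `q` moves from `p̄_k` a distance `c`
orthogonally to `p̄_k - p_i`, so Pythagoras gives `‖q - p_i‖² = c² (1 - 1/k) + c²`.
-/

open RealInnerProductSpace
open scoped Finset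

variable {ι E : Type*} [NormedAddCommGroup E] [InnerProductSpace ℝ E]

noncomputable def centroid (s : Finset ι) (v : ι → E) : E :=
  (#s : ℝ)⁻¹ • ∑ i ∈ s, v i

theorem centroid_singleton (i : ι) (v : ι → E) : centroid {i} v = v i := by
  simp [centroid]

theorem centroid_const_smul (s : Finset ι) (c : ℝ) (v : ι → E) :
    centroid s (fun i => c • v i) = c • centroid s v := by
  rw [centroid, centroid, ← Finset.smul_sum, smul_comm]

theorem norm_add_smul_normalize_sq {a d : E} (had : ⟪a, d⟫ = 0) (hd : d ≠ 0) (t : ℝ) :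
    ‖a + t • (‖d‖⁻¹ • d)‖ ^ 2 = ‖a‖ ^ 2 + t ^ 2 := by
  rw [norm_add_sq_real, real_inner_smul_right, real_inner_smul_right, had, mul_zero, mul_zero,
    mul_zero, add_zero, norm_smul, norm_smul, norm_inv, norm_norm,
    inv_mul_cancel₀ (norm_ne_zero_iff.mpr hd), mul_one, Real.norm_eq_abs, sq_abs]

namespace Orthonormal

variable {e : ι → E} {s t u : Finset ι}

theorem inner_sum_sum [DecidableEq ι] (he : Orthonormal ℝ e) (s t : Finset ι) :
    ⟪∑ i ∈ s, e i, ∑ j ∈ t, e j⟫ = #(s ∩ t) := by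
  simp [sum_inner, inner_sum, orthonormal_iff_ite.mp he, Finset.inter_comm]

theorem inner_centroid_centroid_of_subset (he : Orthonormal ℝ e) (hs : s.Nonempty)
    (hst : s ⊆ t) :
    ⟪centroid s e, centroid t e⟫ = (#t : ℝ)⁻¹ := by
  classical
  have hs' : (#s : ℝ) ≠ 0 := by exact_mod_cast hs.card_ne_zero
  rw [centroid, centroid, real_inner_smul_left, real_inner_smul_right, he.inner_sum_sum,
    Finset.inter_eq_left.mpr hst]
  field_simp

theorem norm_centroid_sub_centroid_sq (he : Orthonormal ℝ e) (hs : s.Nonempty) (hst : s ⊆ t) :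
    ‖centroid s e - centroid t e‖ ^ 2 = (#s : ℝ)⁻¹ - (#t : ℝ)⁻¹ := by
  rw [← real_inner_self_eq_norm_sq, inner_sub_left, inner_sub_right, inner_sub_right,
    real_inner_comm (centroid s e) (centroid t e),
    he.inner_centroid_centroid_of_subset hs hst, he.inner_centroid_centroid_of_subset hs le_rfl,
    he.inner_centroid_centroid_of_subset (hs.mono hst) le_rfl]
  ring

theorem centroid_ne_centroid_of_ssubset (he : Orthonormal ℝ e) (hs : s.Nonempty) (hst : s ⊂ t) :
    centroid s e ≠ centroid t e := by
  intro h
  have hcard : (#s : ℝ) < #t := by exact_mod_cast Finset.card_lt_card hst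
  have := he.norm_centroid_sub_centroid_sq hs hst.subset
  rw [h, sub_self, norm_zero, sq, mul_zero, eq_comm, sub_eq_zero] at this
  exact hcard.ne (inv_injective this)

theorem inner_centroid_sub_centroid_eq_zero (he : Orthonormal ℝ e) (hu : u.Nonempty)
    (hus : u ⊆ s) (hst : s ⊆ t) :
    ⟪centroid s e - centroid u e, centroid s e - centroid t e⟫ = 0 := by
  have hs := hu.mono hus
  rw [inner_sub_left, inner_sub_right, inner_sub_right,
    he.inner_centroid_centroid_of_subset hs le_rfl, he.inner_centroid_centroid_of_subset hs hst,
    he.inner_centroid_centroid_of_subset hu hus,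
    he.inner_centroid_centroid_of_subset hu (hus.trans hst)]
  ring

end Orthonormal

theorem stmt11_general {n k : ℕ} (hkn : k < n) (z : ℝ) (hz : 0 < z)
    (p : Fin n → EuclideanSpace ℝ (Fin n))
    (hp : ∀ i, p i = (z / Real.sqrt 2) • EuclideanSpace.single i (1 : ℝ))
    (pbark pbar q : EuclideanSpace ℝ (Fin n))
    (hpbark : pbark = (k : ℝ)⁻¹ • ∑ i ∈ Finset.univ.filter (fun i : Fin n => (i : ℕ) < k), p i)
    (hpbar : pbar = (n : ℝ)⁻¹ • ∑ i, p i)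
    (hq : q = pbark + (z / Real.sqrt 2) • (‖pbark - pbar‖⁻¹ • (pbark - pbar))) :
    ∀ i : Fin n, (i : ℕ) < k → ‖q - p i‖ ^ 2 = z ^ 2 - z ^ 2 / (2 * k) := by
  intro i hi
  set c := z / Real.sqrt 2
  set e := fun j : Fin n => EuclideanSpace.single j (1 : ℝ)
  have he : Orthonormal ℝ e := EuclideanSpace.orthonormal_single
  set F := Finset.univ.filter (fun j : Fin n => (j : ℕ) < k)
  have hFcard : #F = k := by
    rw [show F = Finset.Iio ⟨k, hkn⟩ by ext j; simp [F, Fin.lt_def], Fin.card_Iio]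
  have hiF : {i} ⊆ F := by simpa [F] using hi
  have hFU : F ⊂ Finset.univ := (Finset.subset_univ F).ssubset_of_not_subset fun h => by
    simpa [F] using h (Finset.mem_univ ⟨k, hkn⟩)
  have hpc : p = fun j => c • e j := funext hp
  have hpi : p i = c • centroid {i} e := by rw [centroid_singleton, hp]
  replace hpbark : pbark = c • centroid F e := by
    rw [hpbark, ← centroid_const_smul, ← hpc, centroid, hFcard]
  replace hpbar : pbar = c • centroid Finset.univ e := by
    rw [hpbar, ← centroid_const_smul, ← hpc, centroid, Finset.card_univ, Fintype.card_fin]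
  have hc : c ^ 2 = z ^ 2 / 2 := by rw [div_pow, Real.sq_sqrt zero_le_two]
  have hc0 : c ≠ 0 := by positivity
  rw [hq, add_sub_right_comm, norm_add_smul_normalize_sq, hpbark, hpi, ← smul_sub,
    norm_smul, mul_pow, norm_sub_rev, he.norm_centroid_sub_centroid_sq (by simp) hiF,
    Finset.card_singleton, hFcard, Real.norm_eq_abs, sq_abs, hc]
  · ring
  · rw [hpbark, hpbar, hpi, ← smul_sub, ← smul_sub, real_inner_smul_left, real_inner_smul_right,
      he.inner_centroid_sub_centroid_eq_zero (by simp) hiF hFU.subset, mul_zero, mul_zero]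
  · rw [hpbark, hpbar, ← smul_sub]
    have hFne : F.Nonempty := ⟨i, hiF (Finset.mem_singleton_self i)⟩
    exact smul_ne_zero hc0 (sub_ne_zero.mpr (he.centroid_ne_centroid_of_ssubset hFne hFU))

theorem stmt11 {n k : ℕ} (hk : 1 ≤ k) (hkn : k < n) (z : ℝ) (hz : 0 < z)
    (p : Fin n → EuclideanSpace ℝ (Fin n))
    (hp : ∀ i, p i = (z / Real.sqrt 2) • EuclideanSpace.single i (1 : ℝ))
    (pbark pbar q : EuclideanSpace ℝ (Fin n))
    (hpbark : pbark = (k : ℝ)⁻¹ • ∑ i ∈ Finset.univ.filter (fun i : Fin n => (i : ℕ) < k), p i)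
    (hpbar : pbar = (n : ℝ)⁻¹ • ∑ i, p i)
    (hq : q = pbark + (z / Real.sqrt 2) • (‖pbark - pbar‖⁻¹ • (pbark - pbar))) :
    ∀ i : Fin n, (i : ℕ) < k → ‖q - p i‖ ^ 2 = z ^ 2 - z ^ 2 / (2 * k) :=
  stmt11_general hkn z hz p hp pbark pbar q hpbark hpbar hq
end

section
/- Let z > 0, 1 ≤ k < n, and p_i = (z/√2)·e_i ∈ ℝ^n. With p̄_k, p̄, p as before and p̄_{-k} = (1/(n-k)) Σ_{i=k+1}^n p_i, then for every i with k+1 ≤ i ≤ n, ‖p - p_i‖² = (z²/2)·(1 + √(1/k - 1/n) + √(1/(n-k) - 1/n))² + (z²/2)·(1 - 1/(n-k)). -/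
/-!
Take `p j = c • v j` for an orthonormal family `v`, and write `k = #S`, `N = card ι`,
`A = ∑ j ∈ S, v j`, `B = ∑ j ∈ Sᶜ, v j`. All points involved are combinations of `A`, `B` and
`v i`, whose Gram matrix is `diag (k, N - k, 1)` except for `⟪B, v i⟫ = 1`. With `s, t` the two
square roots of the statement, `s * t = 1 / N`, so `p̄_S - p̄ = c • (s ^ 2 • A - (s * t) • B)` has
norm `c * s` and `q - p i = c • ((1 / k + s) • A - t • B - v i)`; its squared norm is read off the
Gram matrix.
-/

open Finset RealInnerProductSpace

variable {ι E : Type*} [NormedAddCommGroup E] [InnerProductSpace ℝ E] {v : ι → E}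

theorem Orthonormal.inner_sum_sum_s12 [DecidableEq ι] (hv : Orthonormal ℝ v) (s t : Finset ι) :
    ⟪∑ i ∈ s, v i, ∑ j ∈ t, v j⟫ = #(s ∩ t) := by
  simp [sum_inner, inner_sum, orthonormal_iff_ite.mp hv, inter_comm t s]

theorem Orthonormal.norm_sq_smul_sum_add_smul_sum_compl_add_smul [Fintype ι] [DecidableEq ι]
    (hv : Orthonormal ℝ v) {S : Finset ι} {i : ι} (hi : i ∉ S) (α β γ : ℝ) :
    ‖α • ∑ j ∈ S, v j + β • ∑ j ∈ Sᶜ, v j + γ • v i‖ ^ 2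
      = α ^ 2 * #S + β ^ 2 * #Sᶜ + 2 * β * γ + γ ^ 2 := by
  have hvi : v i = ∑ j ∈ {i}, v j := (sum_singleton v i).symm
  rw [← real_inner_self_eq_norm_sq, hvi]
  simp only [inner_add_left, inner_add_right, inner_smul_left, inner_smul_right,
    hv.inner_sum_sum_s12]
  simp [hi, inter_comm Sᶜ S]
  ring

theorem Real.sqrt_one_div_sub_one_div_mul_sqrt {k n : ℝ} (hk : 0 < k) (hkn : k < n) :
    √(1 / k - 1 / n) * √(1 / (n - k) - 1 / n) = 1 / n := by
  have hn : 0 < n := hk.trans hkn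
  have hnk : 0 < n - k := sub_pos.mpr hkn
  rw [← Real.sqrt_mul (sub_nonneg.mpr (one_div_le_one_div_of_le hk hkn.le)),
    show (1 / k - 1 / n) * (1 / (n - k) - 1 / n) = (1 / n) ^ 2 by field_simp; ring]
  exact Real.sqrt_sq (by positivity)

theorem Orthonormal.norm_shifted_centroid_sub_sq [Fintype ι] [DecidableEq ι] (hv : Orthonormal ℝ v)
    {S : Finset ι} (hS : S.Nonempty) {i : ι} (hi : i ∉ S) {c : ℝ} (hc : 0 < c) (pS p q : E)
    (hpS : pS = (#S : ℝ)⁻¹ • ∑ j ∈ S, c • v j)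
    (hp : p = (Fintype.card ι : ℝ)⁻¹ • ∑ j, c • v j)
    (hq : q = pS + c • (‖pS - p‖⁻¹ • (pS - p))) :
    ‖q - c • v i‖ ^ 2 =
      c ^ 2 * (1 + √(1 / #S - 1 / Fintype.card ι)
          + √(1 / ((Fintype.card ι : ℝ) - #S) - 1 / Fintype.card ι)) ^ 2
        + c ^ 2 * (1 - 1 / ((Fintype.card ι : ℝ) - #S)) := by
  have hk : (0 : ℝ) < #S := by exact_mod_cast hS.card_pos
  have hkN : (#S : ℝ) < Fintype.card ι := by exact_mod_cast card_lt_univ_of_notMem hi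
  have hm : (#Sᶜ : ℝ) = Fintype.card ι - #S := by
    rw [eq_sub_iff_add_eq, ← Nat.cast_add, card_compl_add_card]
  set k : ℝ := (#S : ℝ) with hk_def
  set N : ℝ := (Fintype.card ι : ℝ)
  have hN : N ≠ 0 := (hk.trans hkN).ne'
  have hNk : N - k ≠ 0 := (sub_pos.mpr hkN).ne'
  set s := √(1 / k - 1 / N)
  set t := √(1 / (N - k) - 1 / N)
  have hs : 0 < s := Real.sqrt_pos.mpr (sub_pos.mpr (one_div_lt_one_div_of_lt hk hkN))
  have hs2 : s ^ 2 = 1 / k - 1 / N :=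
    Real.sq_sqrt (sub_nonneg.mpr (one_div_le_one_div_of_le hk hkN.le))
  have ht2 : t ^ 2 = 1 / (N - k) - 1 / N :=
    Real.sq_sqrt (sub_nonneg.mpr (one_div_le_one_div_of_le (sub_pos.mpr hkN) (by linarith)))
  have hst : s * t = 1 / N := Real.sqrt_one_div_sub_one_div_mul_sqrt hk hkN
  have hsum : s ^ 2 * k + t ^ 2 * (N - k) = 1 := by
    rw [hs2, ht2]
    field_simp
    ring
  have hd : pS - p =
      c • (s ^ 2 • ∑ j ∈ S, v j + (-(s * t)) • ∑ j ∈ Sᶜ, v j + (0 : ℝ) • v i) := by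
    rw [hpS, hp, ← sum_add_sum_compl S, hs2, hst, ← smul_sum, ← smul_sum]
    module
  have hdn : ‖pS - p‖ = c * s := by
    rw [← sq_eq_sq₀ (norm_nonneg _) (by positivity), hd, norm_smul, mul_pow,
      hv.norm_sq_smul_sum_add_smul_sum_compl_add_smul hi, hm, Real.norm_of_nonneg hc.le, ← hk_def]
    linear_combination c ^ 2 * s ^ 2 * hsum
  have hqv : q - c • v i =
      c • ((1 / k + s) • ∑ j ∈ S, v j + (-t) • ∑ j ∈ Sᶜ, v j + (-1 : ℝ) • v i) := by
    rw [hq, hdn, hd, hpS, ← smul_sum]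
    match_scalars
    all_goals field_simp
    ring
  have h1 : k * (1 / k) = 1 := by field_simp
  rw [hqv, norm_smul, mul_pow, hv.norm_sq_smul_sum_add_smul_sum_compl_add_smul hi, hm,
    Real.norm_of_nonneg hc.le, ← hk_def]
  linear_combination c ^ 2 * (hsum - hs2 - ht2 - 2 * hst + (1 / k + 2 * s) * h1)

theorem stmt12 {n k : ℕ} (hk : 1 ≤ k) (hkn : k < n) (z : ℝ) (hz : 0 < z)
    (p : Fin n → EuclideanSpace ℝ (Fin n))
    (hp : ∀ i, p i = (z / Real.sqrt 2) • EuclideanSpace.single i (1 : ℝ))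
    (pbark pbar q : EuclideanSpace ℝ (Fin n))
    (hpbark : pbark = (k : ℝ)⁻¹ • ∑ i ∈ Finset.univ.filter (fun i : Fin n => (i : ℕ) < k), p i)
    (hpbar : pbar = (n : ℝ)⁻¹ • ∑ i, p i)
    (hq : q = pbark + (z / Real.sqrt 2) • (‖pbark - pbar‖⁻¹ • (pbark - pbar))) :
    ∀ i : Fin n, k ≤ (i : ℕ) →
      ‖q - p i‖ ^ 2 =
        (z ^ 2 / 2) *
            (1 + Real.sqrt (1 / k - 1 / n) + Real.sqrt (1 / ((n : ℝ) - k) - 1 / n)) ^ 2 +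
          (z ^ 2 / 2) * (1 - 1 / ((n : ℝ) - k)) := by
  intro i hi
  set S := univ.filter (fun j : Fin n => (j : ℕ) < k)
  have hS : #S = k := by simpa [S, Fin.card_filter_val_lt] using hkn.le
  have hS_nonempty : S.Nonempty := ⟨⟨0, by omega⟩, by simp [S]; omega⟩
  have hc2 : (z / √2) ^ 2 = z ^ 2 / 2 := by rw [div_pow, Real.sq_sqrt zero_le_two]
  have key := EuclideanSpace.orthonormal_single.norm_shifted_centroid_sub_sq hS_nonempty
    (i := i) (by simpa [S] using hi) (div_pos hz (by positivity)) pbark pbar q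
    (by rw [hS, hpbark]; simp_rw [hp]) (by rw [Fintype.card_fin, hpbar]; simp_rw [hp]) hq
  rw [hp i, key, hS, Fintype.card_fin, hc2]
end

section
/- Let f be a drop kernel profile: there exist C > 0 and z > r > 0 with f(z_1) - f(z_2) > C for all z_1 ∈ (z-r, z), z_2 ∈ (z, z+r). In the construction P = {(z/√2)e_i : i ≤ n} ⊂ ℝ^n, if Q ⊆ P has size k satisfying the interval conditions guaranteeing l_1 ∈ (z-r,z) and l_2 ∈ (z,z+r), and sup_x |kde_P(x) - kde_Q(x)| ≤ ε with kde defined via K(x,y)=f(‖x-y‖), then (1 - k/n)·C ≤ ε, i.e., k ≥ n(1 - ε/C). -/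
/-!
Write `a = z / √2`, so that the points `p i = a • eᵢ` are pairwise at distance `z`, and
`s = √k`. At `x = t • 𝟙_Q` with `t = a (s + 1) / s²` one has
`‖x - p j‖² = k t² - 2 a t [j ∈ Q] + a²`, which is `z² (1 - 1/(2k))` for `j ∈ Q` and
`z² (1 + 1/s + 1/(2k))` for `j ∉ Q`. The lower bound `s ≥ 4 z² / (2 z r + r²)` puts these
distances in `(z - r, z)` and `(z, z + r)` respectively, so
`kde_P x - kde_Q x = (1 - k/n) (f l₂ - f l₁)` with `f l₁ - f l₂ > C`.
-/

open Finset

theorem EuclideanSpace.norm_sub_smul_single_sq {ι : Type*} [Fintype ι] [DecidableEq ι]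
    (x : EuclideanSpace ℝ ι) (a : ℝ) (j : ι) :
    ‖x - a • EuclideanSpace.single j (1 : ℝ)‖ ^ 2 = ‖x‖ ^ 2 - 2 * a * x j + a ^ 2 := by
  rw [norm_sub_sq_real, inner_smul_right, EuclideanSpace.inner_single_right, norm_smul,
    PiLp.norm_single]
  simp only [conj_trivial, one_mul, norm_one, mul_one, Real.norm_eq_abs, sq_abs]
  ring

theorem EuclideanSpace.norm_sq_toLp_ite {ι : Type*} [Fintype ι] [DecidableEq ι]
    (Q : Finset ι) (t : ℝ) :
    ‖(WithLp.toLp 2 fun i => if i ∈ Q then t else 0 : EuclideanSpace ℝ ι)‖ ^ 2 = #Q * t ^ 2 := by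
  rw [EuclideanSpace.norm_sq_eq]
  simp [apply_ite]

theorem sub_sq_lt_and_lt_add_sq {z r s : ℝ} (hr : 0 < r) (hrz : r < z) (hs : 1 ≤ s)
    (hzs : 4 * z ^ 2 / (2 * z * r + r ^ 2) ≤ s) :
    (z - r) ^ 2 < z ^ 2 - z ^ 2 / (2 * s ^ 2) ∧
      z ^ 2 + z ^ 2 / s + z ^ 2 / (2 * s ^ 2) < (z + r) ^ 2 := by
  have hz : 0 < z := hr.trans hrz
  have hs0 : 0 < s := one_pos.trans_le hs
  rw [div_le_iff₀ (by positivity)] at hzs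
  have hs_sq : z ^ 2 / (2 * s ^ 2) ≤ z ^ 2 / (2 * s) := by
    gcongr; nlinarith
  have hzs_div : z ^ 2 / s ≤ (2 * z * r + r ^ 2) / 4 := by
    rw [div_le_iff₀ hs0]; linarith
  have hhalf : z ^ 2 / (2 * s) = z ^ 2 / s / 2 := by ring
  constructor <;> nlinarith

theorem mean_sub_mean_eq_of_eqOn {ι : Type*} [Fintype ι] {Q : Finset ι} (hQ : Q.Nonempty)
    {g : ι → ℝ} {u v : ℝ} (hu : ∀ i ∈ Q, g i = u) (hv : ∀ i ∉ Q, g i = v) :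
    (Fintype.card ι : ℝ)⁻¹ * ∑ i, g i - (#Q : ℝ)⁻¹ * ∑ i ∈ Q, g i
      = (1 - #Q / Fintype.card ι) * (v - u) := by
  classical
  have hQu : ∑ i ∈ Q, g i = #Q * u := by
    rw [sum_congr rfl hu, sum_const, nsmul_eq_mul]
  have hQv : ∑ i ∈ Qᶜ, g i = (Fintype.card ι - #Q) * v := by
    rw [sum_congr rfl fun i hi => hv i (mem_compl.mp hi), sum_const, nsmul_eq_mul, card_compl,
      Nat.cast_sub (card_le_univ Q)]
  have hQ0 : (#Q : ℝ) ≠ 0 := by exact_mod_cast hQ.card_ne_zero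
  have hι0 : (Fintype.card ι : ℝ) ≠ 0 :=
    Nat.cast_ne_zero.mpr (hQ.card_pos.trans_le (card_le_univ Q)).ne'
  rw [← sum_add_sum_compl Q, hQu, hQv]
  field_simp
  ring

theorem exists_norm_sub_smul_single_eq_ite {ι : Type*} [Fintype ι] [DecidableEq ι]
    {Q : Finset ι} (hQ : Q.Nonempty) {z r : ℝ} (hr : 0 < r) (hrz : r < z)
    (hQz : 4 * z ^ 2 / (2 * z * r + r ^ 2) ≤ √(#Q : ℝ)) :
    ∃ x : EuclideanSpace ℝ ι, ∃ l₁ ∈ Set.Ioo (z - r) z, ∃ l₂ ∈ Set.Ioo z (z + r),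
      ∀ j, ‖x - (z / √2) • EuclideanSpace.single j (1 : ℝ)‖ = if j ∈ Q then l₁ else l₂ := by
  have hz : 0 < z := hr.trans hrz
  set s := √(#Q : ℝ)
  have hs1 : 1 ≤ s := Real.one_le_sqrt.mpr (by exact_mod_cast hQ.card_pos)
  have hs2 : s ^ 2 = #Q := Real.sq_sqrt (Nat.cast_nonneg _)
  have ha : (z / √2) ^ 2 = z ^ 2 / 2 := by rw [div_pow, Real.sq_sqrt zero_le_two]
  obtain ⟨h₁, h₂⟩ := sub_sq_lt_and_lt_add_sq hr hrz hs1 hQz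
  have hpos : 0 < z ^ 2 / (2 * s ^ 2) := by positivity
  have hpos' : 0 < z ^ 2 / s := by positivity
  refine ⟨WithLp.toLp 2 fun i => if i ∈ Q then z / √2 * (s + 1) / s ^ 2 else 0,
    √(z ^ 2 - z ^ 2 / (2 * s ^ 2)),
    ⟨(Real.lt_sqrt (sub_pos.mpr hrz).le).mpr h₁, (Real.sqrt_lt' hz).mpr (by linarith)⟩,
    √(z ^ 2 + z ^ 2 / s + z ^ 2 / (2 * s ^ 2)),
    ⟨(Real.lt_sqrt hz.le).mpr (by linarith), (Real.sqrt_lt' (by linarith)).mpr h₂⟩, ?_⟩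
  intro j
  rw [← Real.sqrt_sq (norm_nonneg _), EuclideanSpace.norm_sub_smul_single_sq,
    EuclideanSpace.norm_sq_toLp_ite, ← hs2]
  dsimp only
  set a := z / √2
  have hz2 : z ^ 2 = 2 * a ^ 2 := by rw [ha]; ring
  split_ifs <;> congr 1 <;> rw [hz2] <;> field_simp <;> ring

theorem stmt16 {n k : ℕ} (z r C ε : ℝ) (hr : 0 < r) (hrz : r < z) (hC : 0 < C)
    (f : ℝ → ℝ)
    (hdrop : ∀ z1 ∈ Set.Ioo (z - r) z, ∀ z2 ∈ Set.Ioo z (z + r), f z1 - f z2 > C)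
    (p : Fin n → EuclideanSpace ℝ (Fin n))
    (hp : ∀ i, p i = (z / Real.sqrt 2) • EuclideanSpace.single i (1 : ℝ))
    (hk1 : 1 ≤ k)
    (hkup : (k : ℝ) ≤ min ((n : ℝ) - 1) ((n : ℝ) - (4 * z ^ 2 / (2 * z * r + r ^ 2)) ^ 2))
    (hklo : (k : ℝ) ≥ max (z ^ 2 / (2 * (2 * z * r - r ^ 2)))
      ((4 * z ^ 2 / (2 * z * r + r ^ 2)) ^ 2))
    (hε : ∀ x : EuclideanSpace ℝ (Fin n),
      |(n : ℝ)⁻¹ * (∑ i, f ‖x - p i‖) -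
        (k : ℝ)⁻¹ * ∑ i ∈ Finset.univ.filter (fun i : Fin n => (i : ℕ) < k), f ‖x - p i‖| ≤ ε) :
    (1 - (k : ℝ) / n) * C ≤ ε ∧ (k : ℝ) ≥ (n : ℝ) * (1 - ε / C) := by
  set Q := Finset.univ.filter fun i : Fin n => (i : ℕ) < k
  have hkn : (k : ℝ) < n := by linarith [min_le_left _ _ |>.trans' hkup]
  have hQ : #Q = k := by rw [Fin.card_filter_val_lt, min_eq_right (by exact_mod_cast hkn.le)]
  have hQne : Q.Nonempty := card_pos.mp (hQ ▸ hk1)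
  obtain ⟨x, l₁, hl₁, l₂, hl₂, hx⟩ := exists_norm_sub_smul_single_eq_ite hQne hr hrz
    (hQ ▸ (le_abs_self _).trans (Real.abs_le_sqrt ((le_max_right _ _).trans hklo)))
  have hmean := mean_sub_mean_eq_of_eqOn (g := fun i => f ‖x - p i‖) (u := f l₁) (v := f l₂)
    hQne (fun i hi => by simp [hp, hx, hi]) (fun i hi => by simp [hp, hx, hi])
  rw [Fintype.card_fin, hQ] at hmean
  have hεx : |(1 - (k : ℝ) / n) * (f l₂ - f l₁)| ≤ ε := hmean ▸ hε x
  have hn : (0 : ℝ) < n := by linarith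
  have hmain : (1 - (k : ℝ) / n) * C ≤ ε := calc
    (1 - (k : ℝ) / n) * C ≤ (1 - (k : ℝ) / n) * (f l₁ - f l₂) := by
      gcongr
      · rw [sub_nonneg, div_le_one hn]; exact hkn.le
      · exact (hdrop l₁ hl₁ l₂ hl₂).le
    _ = -((1 - (k : ℝ) / n) * (f l₂ - f l₁)) := by ring
    _ ≤ ε := (neg_le_abs _).trans hεx
  refine ⟨hmain, ?_⟩
  have hεC : 1 - ε / C ≤ k / n := by linarith [(le_div_iff₀ hC).mpr hmain]
  calc (n : ℝ) * (1 - ε / C) ≤ n * (k / n) := by gcongr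
    _ = k := mul_div_cancel₀ _ hn.ne'
end

section
/- Let z > r > 0, and let n > k ≥ 1 with k ≥ (4z²/(2zr + r²))² and n - k ≥ (4z²/(2zr + r²))². Then l_2 defined by l_2² = (z²/2)(1 + √(1/k - 1/n) + √(1/(n-k) - 1/n))² + (z²/2)(1 - 1/(n-k)) satisfies z < l_2 < z + r. -/
/-
Write a = √(1/k - 1/n), b = √(1/(n-k) - 1/n) and ε = (2zr + r²)/(4z²), so that (z + r)² = z² + 4z²ε.
Since b² = 1/(n-k) - 1/n, the definition reads l₂² = (z²/2)·Q with Q = 2 + 2a + 2b + 2ab + a² - 1/n.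
The lower bound Q > 2 holds because 2b > 1/n as soon as k ≥ 1. The hypotheses on k and n - k give
a, b ≤ ε, and r < z gives 3ε ≤ 4, so Q ≤ 2 + 4ε + 3ε² - 1/n < 2 + 8ε.
-/

namespace Real

lemma sqrt_one_div_sub_le {x y ε : ℝ} (hε : 0 < ε) (hx : (1 / ε) ^ 2 ≤ x) (hy : 0 ≤ y) :
    √(1 / x - y) ≤ ε := by
  have : 1 / x ≤ ε ^ 2 := by simpa using one_div_le_one_div_of_le (by positivity) hx
  rw [sqrt_le_left hε.le]
  linarith

lemma one_div_lt_two_mul_sqrt_one_div_sub {k n : ℝ} (hk : 1 ≤ k) (hkn : k < n) :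
    1 / n < 2 * √(1 / (n - k) - 1 / n) := by
  have hn : 0 < n := by linarith
  have hnk : 0 < n - k := by linarith
  have hsq : (1 / (2 * n)) ^ 2 < 1 / (n - k) - 1 / n := by
    rw [show 1 / (n - k) - 1 / n = k / ((n - k) * n) by field_simp; ring,
      div_pow, div_lt_div_iff₀ (by positivity) (by positivity)]
    nlinarith
  calc 1 / n = 2 * (1 / (2 * n)) := by field_simp
    _ < 2 * √(1 / (n - k) - 1 / n) := by gcongr; exact lt_sqrt_of_sq_lt hsq

end Real

theorem stmt18 {n k : ℕ} (z r : ℝ) (hr : 0 < r) (hrz : r < z)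
    (hk1 : 1 ≤ k) (hkn : k < n)
    (hklo : (k : ℝ) ≥ (4 * z ^ 2 / (2 * z * r + r ^ 2)) ^ 2)
    (hnk : (n : ℝ) - k ≥ (4 * z ^ 2 / (2 * z * r + r ^ 2)) ^ 2)
    (l2 : ℝ) (hl2pos : 0 ≤ l2)
    (hl2 : l2 ^ 2 =
      (z ^ 2 / 2) *
          (1 + Real.sqrt (1 / k - 1 / n) + Real.sqrt (1 / ((n : ℝ) - k) - 1 / n)) ^ 2 +
        (z ^ 2 / 2) * (1 - 1 / ((n : ℝ) - k))) :
    z < l2 ∧ l2 < z + r := by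
  have hz : 0 < z := hr.trans hrz
  have hk : (1 : ℝ) ≤ k := by exact_mod_cast hk1
  have hkn' : (k : ℝ) < n := by exact_mod_cast hkn
  have hn : 0 < 1 / (n : ℝ) := one_div_pos.mpr (by linarith)
  set ε := (2 * z * r + r ^ 2) / (4 * z ^ 2) with hε_def
  have hε : 0 < ε := by positivity
  have hε3 : 3 * ε ≤ 4 := by
    rw [hε_def, mul_div_assoc', div_le_iff₀ (by positivity)]; nlinarith
  have hzr : (z + r) ^ 2 = z ^ 2 + 4 * z ^ 2 * ε := by rw [hε_def]; field_simp; ring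
  rw [← one_div_div, ← hε_def] at hklo hnk
  have ha_le := Real.sqrt_one_div_sub_le hε hklo hn.le
  have hb_le := Real.sqrt_one_div_sub_le hε hnk hn.le
  have hb_lo := Real.one_div_lt_two_mul_sqrt_one_div_sub hk hkn'
  set a := √(1 / (k : ℝ) - 1 / n)
  set b := √(1 / ((n : ℝ) - k) - 1 / n)
  have ha0 : 0 ≤ a := Real.sqrt_nonneg _
  have hb2 : b ^ 2 = 1 / ((n : ℝ) - k) - 1 / n := Real.sq_sqrt <|
    sub_nonneg.mpr (one_div_le_one_div_of_le (by linarith) (by linarith))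
  set Q := 2 + 2 * a + 2 * b + 2 * a * b + a ^ 2 - 1 / n
  have hl2' : l2 ^ 2 = z ^ 2 / 2 * Q := by rw [hl2]; linear_combination (z ^ 2 / 2) * hb2
  have hQ_lo : 2 < Q := by nlinarith
  have hQ_hi : Q < 2 + 8 * ε := by nlinarith
  have hz2 : 0 < z ^ 2 / 2 := by positivity
  constructor
  · refine lt_of_pow_lt_pow_left₀ 2 hl2pos ?_
    rw [hl2']
    linarith [mul_lt_mul_of_pos_left hQ_lo hz2]
  · refine lt_of_pow_lt_pow_left₀ 2 (by positivity) ?_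
    rw [hl2', hzr]
    linarith [mul_lt_mul_of_pos_left hQ_hi hz2]
end
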